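/- arXiv:2002.08049 — 2 statements merged into one kernel-verified Lean document; each statement's English description precedes it below -/
import Mathlib

section
/- Let 𝔫 = 𝔫⁰ ⊕ 𝔫¹ be a Hoffman graph where 𝔫⁰ has exactly one fat vertex, at least two slim vertices, every slim vertex of 𝔫⁰ is adjacent to the fat vertex, and 𝔫¹ is non-empty. If the slim subgraph of 𝔫 (the induced graph on the slim vertices) is connected, then for every slim vertex x of 𝔫⁰, the slim subgraph of 𝔫 − x is connected. -/
/-- A Hoffman graph: a finite simple graph with vertices labeled slim or fat,
fat vertices pairwise non-adjacent, each fat vertex with a slim neighbor. -/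
structure HoffmanGraph (V : Type) where
  adj : V → V → Prop
  symm : Symmetric adj
  irrefl : Irreflexive adj
  slim : V → Prop
  fat_slim_nbr : ∀ x, ¬ slim x → ∃ y, slim y ∧ adj x y
  fat_not_adj : ∀ x y, ¬ slim x → ¬ slim y → ¬ adj x y

namespace HoffmanGraph

variable {V W U : Type}

def slimSet (H : HoffmanGraph V) : Set V := {x | H.slim x}

def toSimple (H : HoffmanGraph V) : SimpleGraph V where
  Adj := H.adj
  symm := ⟨fun _ _ h => H.symm h⟩
  loopless := ⟨H.irrefl⟩

/-- common fat neighbours of `x` and `y` within the carrier set `S`. -/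
def fatCommonOn (H : HoffmanGraph V) (S : Set V) (x y : V) : Set V :=
  {z | z ∈ S ∧ ¬ H.slim z ∧ H.adj x z ∧ H.adj y z}

/-- The induced Hoffman subgraph of `H` on `S` is the sum of the induced subgraphs
on the sets `P i`. -/
def IsSumOn (H : HoffmanGraph V) (S : Set V) {ι : Type} (P : ι → Set V) : Prop :=
  (∀ i, P i ⊆ S) ∧
  (⋃ i, P i) = S ∧
  (∀ x ∈ S, H.slim x → ∃! i, x ∈ P i) ∧
  (∀ i, ∀ x ∈ P i, H.slim x → ∀ z ∈ S, ¬ H.slim z → H.adj x z → z ∈ P i) ∧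
  (∀ i, ∀ z ∈ P i, ¬ H.slim z → ∃ x ∈ P i, H.slim x ∧ H.adj z x) ∧
  (∀ i j, i ≠ j → ∀ x ∈ P i, ∀ y ∈ P j, H.slim x → H.slim y →
    (H.fatCommonOn S x y).ncard ≤ 1 ∧ ((H.fatCommonOn S x y).ncard = 1 ↔ H.adj x y))

/-- Binary sum. -/
def IsSumOn2 (H : HoffmanGraph V) (S A B : Set V) : Prop :=
  H.IsSumOn S (fun b : Bool => if b then A else B)

/-- The induced Hoffman subgraph on `S` is non-empty and not a sum of two non-empty
Hoffman subgraphs. -/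
def Indecomposable (H : HoffmanGraph V) (S : Set V) : Prop :=
  S.Nonempty ∧ ∀ A B : Set V, A.Nonempty → B.Nonempty → ¬ H.IsSumOn2 S A B

/-- `⟪X⟫`: `X` together with the fat neighbours (inside the carrier `S`) of its members. -/
def hind (H : HoffmanGraph V) (S X : Set V) : Set V :=
  X ∪ {z | z ∈ S ∧ ¬ H.slim z ∧ ∃ x ∈ X, H.adj x z}

/-- `e` is an isomorphism of Hoffman graphs. -/
def IsIso (H : HoffmanGraph V) (K : HoffmanGraph W) (e : V ≃ W) : Prop :=
  (∀ x y, H.adj x y ↔ K.adj (e x) (e y)) ∧ ∀ x, (H.slim x ↔ K.slim (e x))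

/-- `K` is isomorphic to the induced Hoffman subgraph of `L` on `S`. -/
def IsoToInduced (K : HoffmanGraph W) (L : HoffmanGraph U) (S : Set U) : Prop :=
  ∃ e : W ≃ S, (∀ x y, K.adj x y ↔ L.adj (e x).1 (e y).1) ∧ ∀ x, (K.slim x ↔ L.slim (e x).1)

/-- `K` is isomorphic to an induced Hoffman subgraph of `L`. -/
def IsSubgraphOf (K : HoffmanGraph W) (L : HoffmanGraph U) : Prop :=
  ∃ S : Set U, IsoToInduced K L S

/-- The induced Hoffman subgraph on `S` is (isomorphic to) `𝔥₂`:
one slim vertex adjacent to two fat vertices. -/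
def IsH2On (H : HoffmanGraph V) (S : Set V) : Prop :=
  ∃ s f₁ f₂ : V, f₁ ≠ f₂ ∧ S = {s, f₁, f₂} ∧ H.slim s ∧ ¬ H.slim f₁ ∧ ¬ H.slim f₂ ∧
    H.adj s f₁ ∧ H.adj s f₂

/-- The induced Hoffman subgraph on `S` belongs to the family `𝔒`: it is `𝔥₂` or an
indecomposable fat Hoffman graph with at least 2 slim vertices and exactly one fat vertex. -/
def MemO (H : HoffmanGraph V) (S : Set V) : Prop :=
  H.IsH2On S ∨
  (H.Indecomposable S ∧ 2 ≤ (S ∩ H.slimSet).ncard ∧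
    ∃ w ∈ S, ¬ H.slim w ∧ (∀ z ∈ S, ¬ H.slim z → z = w) ∧ ∀ x ∈ S, H.slim x → H.adj x w)

/-- The induced Hoffman subgraph of `L` on `S` is isomorphic to a member of the family `ℋ`. -/
def MemFam (ℋ : ∀ W : Type, HoffmanGraph W → Prop) (L : HoffmanGraph U) (S : Set U) : Prop :=
  ∃ (W : Type) (K : HoffmanGraph W), ℋ W K ∧ IsoToInduced K L S

/-- `K` is a sum of members of `ℋ`. -/
def IsCoverGraph (ℋ : ∀ W : Type, HoffmanGraph W → Prop) (K : HoffmanGraph U) : Prop :=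
  ∃ (n : ℕ) (P : Fin n → Set U), K.IsSumOn Set.univ P ∧ ∀ i, MemFam ℋ K (P i)

/-- `G` is a slim `ℋ`-line graph. -/
def IsSlimLine (ℋ : ∀ W : Type, HoffmanGraph W → Prop) {V : Type} (G : SimpleGraph V) : Prop :=
  ∃ (U : Type) (K : HoffmanGraph U) (ι : V → U), Finite U ∧ Function.Injective ι ∧
    (∀ a, K.slim (ι a)) ∧ (∀ a b, G.Adj a b ↔ K.adj (ι a) (ι b)) ∧ IsCoverGraph ℋ K

/-- `K` (with slim vertices identified with `V(G)` via `ι`) is a strict `ℋ`-cover of `G`. -/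
def IsStrictCover (ℋ : ∀ W : Type, HoffmanGraph W → Prop) {V U : Type}
    (G : SimpleGraph V) (K : HoffmanGraph U) (ι : V → U) : Prop :=
  Finite U ∧ Function.Injective ι ∧ (∀ a b, G.Adj a b ↔ K.adj (ι a) (ι b)) ∧
  (∀ u, K.slim u ↔ ∃ a, ι a = u) ∧ IsCoverGraph ℋ K

/-- Two strict covers are equivalent: an isomorphism restricting to the identity on `G`. -/
def EquivCovers {V U U' : Type} (K : HoffmanGraph U) (ι : V → U)
    (K' : HoffmanGraph U') (ι' : V → U') : Prop :=
  ∃ φ : U ≃ U', IsIso K K' φ ∧ ∀ a, φ (ι a) = ι' a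

/-- The family `ℋ̄ = {𝔥₂} ∪ {𝔤 ∈ 𝔒 : 𝔤 is a Hoffman subgraph of a member of ℋ}`. -/
def BarFam (ℋ : ∀ W : Type, HoffmanGraph W → Prop) : ∀ W : Type, HoffmanGraph W → Prop :=
  fun _ K => K.IsH2On Set.univ ∨
    (K.MemO Set.univ ∧ ∃ (U : Type) (L : HoffmanGraph U), ℋ U L ∧ IsSubgraphOf K L)

/-- `G` has a strict `ℱ`-cover and it is unique up to equivalence. -/
def UniqueStrictCover (ℱ : ∀ W : Type, HoffmanGraph W → Prop) {V : Type}
    (G : SimpleGraph V) : Prop :=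
  (∃ (U : Type) (K : HoffmanGraph U) (ι : V → U), IsStrictCover ℱ G K ι) ∧
  ∀ (U U' : Type) (K : HoffmanGraph U) (K' : HoffmanGraph U') (ι : V → U) (ι' : V → U'),
    IsStrictCover ℱ G K ι → IsStrictCover ℱ G K' ι' → EquivCovers K ι K' ι'

end HoffmanGraph

/-!
Since `w` is the only fat vertex of `𝔫⁰` and every slim vertex of `𝔫⁰` is adjacent to it, the sum
condition makes a slim vertex of `𝔫¹` adjacent to one slim vertex of `𝔫⁰` iff it is adjacent to `w`,
and then it is adjacent to all of them. Connectivity of the slim graph yields such a vertex `b`.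
After deleting `x`, a slim neighbour of `x` in `𝔫⁰` is adjacent to `b`, and one in `𝔫¹` is adjacent
to `w`, hence to another slim vertex `x'` of `𝔫⁰`, which is adjacent to `b`. So every walk through
`x` can be rerouted through `b`.
-/

namespace SimpleGraph

variable {α : Type*} {G : SimpleGraph α}

/-- A walk through `x` can be rerouted through `c`. -/
theorem Connected.induce_diff_singleton {S : Set α} (hS : (G.induce S).Connected) {x c : α}
    (hc : c ∈ S \ {x})
    (hnbr : ∀ u (hu : u ∈ S \ {x}), G.Adj x u →
      (G.induce (S \ {x})).Reachable ⟨u, hu⟩ ⟨c, hc⟩) :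
    (G.induce (S \ {x})).Connected := by
  have reroute : ∀ {u v : S} (p : (G.induce S).Walk u v) (hv : v.1 ≠ x),
      (∀ hu : u.1 ≠ x, (G.induce (S \ {x})).Reachable ⟨u, u.2, hu⟩ ⟨v, v.2, hv⟩) ∧
      (u.1 = x → (G.induce (S \ {x})).Reachable ⟨c, hc⟩ ⟨v, v.2, hv⟩) := by
    intro u v p hv
    induction p with
    | nil => exact ⟨fun _ => .rfl, fun hu => absurd hu hv⟩
    | @cons u m v hum q ih =>
      obtain ⟨ihm, ihx⟩ := ih hv
      have hmu : m.1 ≠ u.1 := (G.ne_of_adj (a := u.1) (b := m.1) hum).symm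
      refine ⟨fun hu => ?_, fun hu => ?_⟩
      · by_cases hm : m.1 = x
        · exact (hnbr u ⟨u.2, hu⟩ (by rw [← hm]; exact hum.symm)).trans (ihx hm)
        · have hum' : (G.induce (S \ {x})).Adj ⟨u, u.2, hu⟩ ⟨m, m.2, hm⟩ := hum
          exact hum'.reachable.trans (ihm hm)
      · have hm : m.1 ≠ x := hu ▸ hmu
        exact (hnbr m ⟨m.2, hm⟩ (by rw [← hu]; exact hum)).symm.trans (ihm hm)
  have : Nonempty (S \ {x} : Set α) := ⟨⟨c, hc⟩⟩
  refine ⟨fun u v => ?_⟩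
  obtain ⟨p⟩ := hS.preconnected ⟨u, u.2.1⟩ ⟨v, v.2.1⟩
  exact (reroute p v.2.2).1 u.2.2

end SimpleGraph

namespace HoffmanGraph

variable {V : Type} {H : HoffmanGraph V}

theorem fatCommonOn_univ_ncard_eq_one_iff {a w : V} (hw : ¬ H.slim w) (haw : H.adj a w)
    (honly : ∀ z, ¬ H.slim z → H.adj a z → z = w) (y : V) :
    (H.fatCommonOn Set.univ a y).ncard = 1 ↔ H.adj y w := by
  by_cases hyw : H.adj y w
  · have : H.fatCommonOn Set.univ a y = {w} := by
      ext z
      constructor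
      · rintro ⟨-, hz, haz, -⟩
        exact honly z hz haz
      · rintro rfl
        exact ⟨trivial, hw, haw, hyw⟩
    simp [this, hyw]
  · have : H.fatCommonOn Set.univ a y = ∅ := by
      ext z
      simp only [Set.mem_empty_iff_false, iff_false]
      rintro ⟨-, hz, haz, hyz⟩
      exact hyw (honly z hz haz ▸ hyz)
    simp [this, hyw]

namespace IsSumOn2

variable {A B : Set V}

theorem mem_or_mem (hsum : H.IsSumOn2 Set.univ A B) (a : V) : a ∈ A ∨ a ∈ B := by
  have ha := hsum.2.1 ▸ Set.mem_univ a
  simpa [Set.mem_iUnion, Bool.exists_bool, or_comm] using ha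

theorem notMem_right (hsum : H.IsSumOn2 Set.univ A B) {a : V} (has : H.slim a) (haA : a ∈ A) :
    a ∉ B := by
  intro haB
  obtain ⟨i, -, hi⟩ := hsum.2.2.1 a trivial has
  exact Bool.false_ne_true ((hi false (by simpa using haB)).trans (hi true (by simpa using haA)).symm)

theorem exists_slim_right (hsum : H.IsSumOn2 Set.univ A B) (hB : B.Nonempty) :
    ∃ b ∈ B, H.slim b := by
  obtain ⟨v, hv⟩ := hB
  by_cases hvs : H.slim v
  · exact ⟨v, hv, hvs⟩
  · obtain ⟨b, hb, hbs, -⟩ := hsum.2.2.2.2.1 false v (by simpa using hv) hvs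
    exact ⟨b, by simpa using hb, hbs⟩

theorem fat_nbr_mem_left (hsum : H.IsSumOn2 Set.univ A B) {a z : V} (haA : a ∈ A)
    (has : H.slim a) (hz : ¬ H.slim z) (haz : H.adj a z) : z ∈ A := by
  simpa using hsum.2.2.2.1 true a (by simpa using haA) has z trivial hz haz

theorem adj_iff_fatCommonOn_ncard_eq_one (hsum : H.IsSumOn2 Set.univ A B) {a y : V}
    (haA : a ∈ A) (has : H.slim a) (hyB : y ∈ B) (hys : H.slim y) :
    H.adj a y ↔ (H.fatCommonOn Set.univ a y).ncard = 1 :=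
  (hsum.2.2.2.2.2 true false (by simp) a (by simpa using haA) y (by simpa using hyB) has hys).2.symm

theorem adj_iff_adj_fat (hsum : H.IsSumOn2 Set.univ A B) {w : V} (hw : ¬ H.slim w)
    (huniq : ∀ z ∈ A, ¬ H.slim z → z = w) {a y : V} (haA : a ∈ A) (has : H.slim a)
    (haw : H.adj a w) (hyB : y ∈ B) (hys : H.slim y) : H.adj a y ↔ H.adj y w :=
  (hsum.adj_iff_fatCommonOn_ncard_eq_one haA has hyB hys).trans <|
    fatCommonOn_univ_ncard_eq_one_iff hw haw
      (fun z hz haz => huniq z (hsum.fat_nbr_mem_left haA has hz haz) hz) y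

theorem exists_adj_of_connected (hsum : H.IsSumOn2 Set.univ A B)
    (hconn : (H.toSimple.induce H.slimSet).Connected) {a b : V} (haA : a ∈ A)
    (has : H.slim a) (hbB : b ∈ B) (hbs : H.slim b) :
    ∃ a' ∈ A, ∃ b' ∈ B, H.slim a' ∧ H.slim b' ∧ H.adj a' b' := by
  obtain ⟨p⟩ := hconn.preconnected ⟨a, has⟩ ⟨b, hbs⟩
  obtain ⟨d, -, hd₁, hd₂⟩ := p.exists_boundary_dart {v | v.1 ∈ A} haA
    fun hbA => hsum.notMem_right hbs hbA hbB
  exact ⟨_, hd₁, _, (hsum.mem_or_mem _).resolve_left hd₂, d.fst.2, d.snd.2, d.adj⟩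

end IsSumOn2

end HoffmanGraph

open HoffmanGraph in
theorem stmt3_general {V : Type} (H : HoffmanGraph V) (A B : Set V)
    (hsum : H.IsSumOn2 Set.univ A B) (hB : B.Nonempty)
    (w : V) (hwfat : ¬ H.slim w)
    (huniq : ∀ z ∈ A, ¬ H.slim z → z = w)
    (hadj : ∀ x ∈ A, H.slim x → H.adj x w)
    (hcard : 2 ≤ (A ∩ H.slimSet).ncard)
    (hconn : (H.toSimple.induce H.slimSet).Connected) :
    ∀ x ∈ A, H.slim x → (H.toSimple.induce (H.slimSet \ {x})).Connected := by
  intro x hxA hxs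
  obtain ⟨x', ⟨hx'A, hx's⟩, hx'x⟩ := Set.exists_ne_of_one_lt_ncard hcard x
  have hA_adj_B {a y : V} (haA : a ∈ A) (has : H.slim a) (hyB : y ∈ B) (hys : H.slim y) :
      H.adj a y ↔ H.adj y w :=
    hsum.adj_iff_adj_fat hwfat huniq haA has (hadj a haA has) hyB hys
  obtain ⟨b₀, hb₀B, hb₀s⟩ := hsum.exists_slim_right hB
  obtain ⟨a, haA, b, hbB, has, hbs, hab⟩ := hsum.exists_adj_of_connected hconn hx'A hx's hb₀B hb₀s
  have hbw : H.adj b w := (hA_adj_B haA has hbB hbs).1 hab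
  have hbx : b ∈ H.slimSet \ {x} := ⟨hbs, fun h => hsum.notMem_right hxs hxA (h ▸ hbB)⟩
  refine hconn.induce_diff_singleton hbx fun u hu hxu => ?_
  rcases hsum.mem_or_mem u with huA | huB
  · exact SimpleGraph.Adj.reachable ((hA_adj_B huA hu.1 hbB hbs).2 hbw)
  · have hx'u : H.adj x' u := (hA_adj_B hx'A hx's huB hu.1).2 ((hA_adj_B hxA hxs huB hu.1).1 hxu)
    have hx'b : (H.toSimple.induce (H.slimSet \ {x})).Adj ⟨x', hx's, hx'x⟩ ⟨b, hbx⟩ :=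
      (hA_adj_B hx'A hx's hbB hbs).2 hbw
    exact (SimpleGraph.Adj.reachable (H.symm hx'u)).trans hx'b.reachable

open HoffmanGraph in
/-- If `𝔫 = 𝔫⁰ ⊕ 𝔫¹` with `𝔫⁰` having a unique fat vertex adjacent to all of its
(at least two) slim vertices and `𝔫¹` non-empty, and the slim subgraph of `𝔫` is
connected, then deleting any slim vertex of `𝔫⁰` keeps the slim subgraph connected. -/
theorem stmt3 {V : Type} [Fintype V] (H : HoffmanGraph V) (A B : Set V)
    (hsum : H.IsSumOn2 Set.univ A B) (hB : B.Nonempty)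
    (w : V) (hwA : w ∈ A) (hwfat : ¬ H.slim w)
    (huniq : ∀ z ∈ A, ¬ H.slim z → z = w)
    (hadj : ∀ x ∈ A, H.slim x → H.adj x w)
    (hcard : 2 ≤ (A ∩ H.slimSet).ncard)
    (hconn : (H.toSimple.induce H.slimSet).Connected) :
    ∀ x ∈ A, H.slim x → (H.toSimple.induce (H.slimSet \ {x})).Connected :=
  stmt3_general H A B hsum hB w hwfat huniq hadj hcard hconn
end

section
/- Let 𝔥 = ⊕_{i∈I} 𝔥^i where each 𝔥^i is non-empty and indecomposable. For every ψ ∈ Aut*(𝔥) (automorphisms of 𝔥 fixing all slim vertices), the restriction of ψ to each 𝔥^i maps V(𝔥^i) into V(𝔥^i) and defines an element of Aut*(𝔥^i); moreover for i ≠ j and x ∈ V_f(𝔥^i) ∩ V_f(𝔥^j), ψ|_{𝔥^i}(x) = ψ|_{𝔥^j}(x). -/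
open HoffmanGraph in
/-- An automorphism of `𝔥 = ⊕ᵢ 𝔥^i` (each addend non-empty indecomposable) fixing all
slim vertices restricts to an automorphism of each addend (fixing its slim vertices);
moreover the restrictions agree on common fat vertices. -/
theorem stmt9 {V : Type} [Fintype V] (H : HoffmanGraph V) {ι : Type} (P : ι → Set V)
    (hsum : H.IsSumOn Set.univ P) (hind : ∀ i, H.Indecomposable (P i))
    (ψ : V ≃ V) (hψ : IsIso H H ψ) (hfix : ∀ x, H.slim x → ψ x = x) :
    ∀ i, Set.BijOn ψ (P i) (P i) := by
  obtain ⟨hadj, hslim⟩ := hψ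
  obtain ⟨-, -, -, h4, h5, -⟩ := hsum
  -- Generic maps-to fact for any automorphism fixing slim vertices
  have key : ∀ (φ : V ≃ V), (∀ x y, H.adj x y ↔ H.adj (φ x) (φ y)) →
      (∀ x, H.slim x ↔ H.slim (φ x)) → (∀ x, H.slim x → φ x = x) →
      ∀ i, Set.MapsTo φ (P i) (P i) := by
    intro φ fadj fslim ffix i z hz
    by_cases hs : H.slim z
    · rwa [ffix z hs]
    · obtain ⟨x, hxPi, hxs, hxadj⟩ := h5 i z hz hs
      have hadjx : H.adj x (φ z) := by
        have := (fadj z x).mp hxadj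
        rw [ffix x hxs] at this
        exact H.symm this
      have hfz : ¬ H.slim (φ z) := fun h => hs ((fslim z).mpr h)
      exact h4 i x hxPi hxs (φ z) (Set.mem_univ _) hfz hadjx
  -- ψ⁻¹ also satisfies the hypotheses
  have sadj : ∀ x y, H.adj x y ↔ H.adj (ψ.symm x) (ψ.symm y) := by
    intro x y
    rw [hadj (ψ.symm x) (ψ.symm y), ψ.apply_symm_apply, ψ.apply_symm_apply]
  have sslim : ∀ x, H.slim x ↔ H.slim (ψ.symm x) := by
    intro x
    rw [hslim (ψ.symm x), ψ.apply_symm_apply]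
  have sfix : ∀ x, H.slim x → ψ.symm x = x := by
    intro x hx
    have := hfix (ψ.symm x) ((sslim x).mp hx)
    rw [ψ.apply_symm_apply] at this
    exact this.symm
  intro i
  refine ⟨key ψ hadj hslim hfix i, ψ.injective.injOn, ?_⟩
  intro y hy
  exact ⟨ψ.symm y, key ψ.symm sadj sslim sfix i hy, ψ.apply_symm_apply y⟩
end
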